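/- Let Ω ⊂ ℝⁿ be a bounded open set, let γ and b be smooth on a neighborhood of the closure of Ω (real-valued and ℝⁿ-valued respectively), let h > 0, set H := { q ∈ ℝⁿ : |q| ≤ h }, and let R : closure(Ω) × H → ℝⁿ be smooth and satisfy |∂_q^α ∂_x^β R(x,q)| ≤ C₂ |q|^{3−|α|} for all (x,q) ∈ closure(Ω) × H, all multi-indices α with |α| ≤ 3 and all multi-indices β with |β| ≤ 1, for some constant C₂ > 0. Define C⃗(x,p) := γ(x) p + |p|² b(x) + R(x,p). Let u₁ and u₂ be C² functions on a neighborhood of the closure of Ω satisfying ∇·(γ ∇u₁) = 0 and ∇·(γ ∇u₂) + ∇·( b |∇u₁|² ) = 0 in Ω. Then there exist ε₀ > 0 and a constant C > 0 such that for every ε ∈ (0, ε₀), the function u_ε := ε u₁ + ε² u₂ satisfies |∇u_ε(x)| ≤ h and | ∇·( C⃗(x, ∇u_ε(x)) ) | ≤ C ε³ for all x ∈ Ω. -/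

import Mathlib

/-!
Write `w = ε u₁ + ε² u₂` and expand `C⃗(x, ∇w) = γ ∇w + |∇w|² b + R(x, ∇w)` in powers of `ε`:
the coefficients of `ε` and `ε²` in its divergence are exactly the left-hand sides of the two
equations, so what is left is `ε³ A + ε⁴ B`, with `A`, `B` continuous and hence bounded on the
compact set `closure Ω`, plus the divergence of `x ↦ R(x, ∇w(x))`. By the chain rule the latter
is `∂ₓR + ∇²w · ∂_qR = O(|∇w|³ + |∇²w| |∇w|²)`. Compactness also makes `∇w` and `∇²w` uniformly
`O(ε)`, which gives the `ε³` bound and, for small `ε`, keeps `∇w` in the ball `|q| ≤ h` where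
the bounds on `R` hold.
-/

open scoped BigOperators

noncomputable section

/-- Partial derivative in the j-th coordinate direction. -/
noncomputable def pd {n : ℕ} {E : Type*} [NormedAddCommGroup E] [NormedSpace ℝ E]
    (j : Fin n) (f : (Fin n → ℝ) → E) (x : Fin n → ℝ) : E :=
  fderiv ℝ f x (Pi.single j 1)

/-- Laplacian: sum of second partial derivatives. -/
noncomputable def lap {n : ℕ} {E : Type*} [NormedAddCommGroup E] [NormedSpace ℝ E]
    (f : (Fin n → ℝ) → E) (x : Fin n → ℝ) : E :=
  ∑ j, pd j (fun y => pd j f y) x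

/-- Partial derivative of a function of `(x, q) ∈ ℝⁿ × ℝⁿ` in a coordinate direction:
`Sum.inl i` is the i-th x-direction, `Sum.inr i` is the i-th q-direction. -/
noncomputable def pdxq {n : ℕ} {E : Type*} [NormedAddCommGroup E] [NormedSpace ℝ E]
    (d : Fin n ⊕ Fin n) (f : (Fin n → ℝ) × (Fin n → ℝ) → E)
    (p : (Fin n → ℝ) × (Fin n → ℝ)) : E :=
  fderiv ℝ f p (Sum.elim (fun i => (Pi.single i 1, 0)) (fun i => (0, Pi.single i 1)) d)

/-- Iterated mixed partial derivative along a list of coordinate directions;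
a list `L` with `L.countP Sum.isLeft = |β|` x-directions and
`L.countP Sum.isRight = |α|` q-directions represents `∂_q^α ∂_x^β`. -/
noncomputable def iterPdxq {n : ℕ} {E : Type*} [NormedAddCommGroup E] [NormedSpace ℝ E] :
    List (Fin n ⊕ Fin n) → ((Fin n → ℝ) × (Fin n → ℝ) → E) →
      ((Fin n → ℝ) × (Fin n → ℝ) → E)
  | [], f => f
  | d :: L, f => pdxq d (iterPdxq L f)

/-- Euclidean norm of a vector in `Fin n → ℝ`. -/
noncomputable def enorm' {n : ℕ} (v : Fin n → ℝ) : ℝ := Real.sqrt (∑ j, v j ^ 2)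

open Filter Topology

variable {n : ℕ}

lemma enorm'_eq_norm (v : Fin n → ℝ) : enorm' v = ‖WithLp.toLp 2 v‖ := by
  simp [EuclideanSpace.norm_eq, enorm']

lemma enorm'_nonneg (v : Fin n → ℝ) : 0 ≤ enorm' v := Real.sqrt_nonneg _

lemma continuous_enorm' : Continuous (enorm' : (Fin n → ℝ) → ℝ) := by
  simpa only [funext enorm'_eq_norm] using (PiLp.continuous_toLp 2 _).norm

lemma enorm'_smul_add_smul_le (a c : Fin n → ℝ) {s t : ℝ} (hs : 0 ≤ s) (ht : 0 ≤ t) :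
    enorm' (s • a + t • c) ≤ s * enorm' a + t * enorm' c := by
  simp only [enorm'_eq_norm, WithLp.toLp_add, WithLp.toLp_smul]
  refine (norm_add_le _ _).trans_eq ?_
  rw [norm_smul, norm_smul, Real.norm_of_nonneg hs, Real.norm_of_nonneg ht]

def grad (u : (Fin n → ℝ) → ℝ) (y : Fin n → ℝ) : Fin n → ℝ := fun i => pd i u y

def divergence (F : (Fin n → ℝ) → Fin n → ℝ) (x : Fin n → ℝ) : ℝ :=
  ∑ j, pd j (fun y => F y j) x

section PartialDerivatives

variable {E : Type*} [NormedAddCommGroup E] [NormedSpace ℝ E]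

lemma Filter.EventuallyEq.pd_eq {f g : (Fin n → ℝ) → E} {x : Fin n → ℝ} (h : f =ᶠ[𝓝 x] g)
    (j : Fin n) : pd j f x = pd j g x := by
  rw [pd, pd, h.fderiv_eq]

lemma pd_add {f g : (Fin n → ℝ) → E} {x : Fin n → ℝ} (hf : DifferentiableAt ℝ f x)
    (hg : DifferentiableAt ℝ g x) (j : Fin n) :
    pd j (fun y => f y + g y) x = pd j f x + pd j g x := by
  simp [pd, fderiv_fun_add hf hg]

lemma pd_const_mul {f : (Fin n → ℝ) → ℝ} {x : Fin n → ℝ} (hf : DifferentiableAt ℝ f x) (c : ℝ)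
    (j : Fin n) : pd j (fun y => c * f y) x = c * pd j f x := by
  simp [pd, fderiv_const_mul hf c]

lemma ContDiffOn.pd {f : (Fin n → ℝ) → E} {V : Set (Fin n → ℝ)} {k m : WithTop ℕ∞}
    (hf : ContDiffOn ℝ k f V) (hV : IsOpen V) (hmk : m + 1 ≤ k) (j : Fin n) :
    ContDiffOn ℝ m (pd j f) V :=
  (ContinuousLinearMap.apply ℝ E (Pi.single j 1 : Fin n → ℝ)).contDiff.comp_contDiffOn
    (hf.fderiv_of_isOpen hV hmk)

theorem pd_comp_prodMk {F : (Fin n → ℝ) × (Fin n → ℝ) → E} {G : (Fin n → ℝ) → Fin n → ℝ}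
    {x : Fin n → ℝ} (hF : DifferentiableAt ℝ F (x, G x)) (hG : DifferentiableAt ℝ G x)
    (j : Fin n) :
    pd j (fun y => F (y, G y)) x =
      pdxq (.inl j) F (x, G x) + ∑ i, pd j (fun y => G y i) x • pdxq (.inr i) F (x, G x) := by
  have hgraph : HasFDerivAt (fun y => (y, G y))
      ((ContinuousLinearMap.id ℝ _).prod (fderiv ℝ G x)) x :=
    (hasFDerivAt_id x).prodMk hG.hasFDerivAt
  have hdir : ((Pi.single j 1 : Fin n → ℝ), fderiv ℝ G x (Pi.single j 1)) =
      (Pi.single j 1, 0) + ∑ i, pd j (fun y => G y i) x • ((0 : Fin n → ℝ), Pi.single i 1) := by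
    ext k
    · simp [Prod.fst_sum]
    · simp [Prod.snd_sum, pd, fderiv_apply hG, Pi.single_apply]
  rw [pd, show (fun y => F (y, G y)) = F ∘ fun y => (y, G y) from rfl,
    fderiv_comp x hF hgraph.differentiableAt, hgraph.fderiv, ContinuousLinearMap.comp_apply,
    ContinuousLinearMap.prod_apply, ContinuousLinearMap.id_apply, hdir, map_add, map_sum]
  simp only [map_smul]
  rfl

end PartialDerivatives

lemma ContDiffOn.grad {u : (Fin n → ℝ) → ℝ} {V : Set (Fin n → ℝ)} {k m : WithTop ℕ∞}
    (hu : ContDiffOn ℝ k u V) (hV : IsOpen V) (hmk : m + 1 ≤ k) : ContDiffOn ℝ m (grad u) V :=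
  contDiffOn_pi.2 fun i => hu.pd hV hmk i

lemma ContDiffOn.differentiableAt_grad {u : (Fin n → ℝ) → ℝ} {V : Set (Fin n → ℝ)}
    (hu : ContDiffOn ℝ 2 u V) (hV : IsOpen V) {x : Fin n → ℝ} (hx : x ∈ V) :
    DifferentiableAt ℝ (_root_.grad u) x :=
  ((hu.grad hV (m := 1) (by norm_num)).differentiableOn one_ne_zero).differentiableAt
    (hV.mem_nhds hx)

lemma grad_smul_add_smul {u v : (Fin n → ℝ) → ℝ} {y : Fin n → ℝ} (hu : DifferentiableAt ℝ u y)
    (hv : DifferentiableAt ℝ v y) (a c : ℝ) :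
    grad (fun z => a * u z + c * v z) y = a • grad u y + c • grad v y := by
  ext i
  simp [grad, pd_add (hu.const_mul a) (hv.const_mul c), pd_const_mul hu, pd_const_mul hv]

lemma eventuallyEq_grad_smul_add_smul {u v : (Fin n → ℝ) → ℝ} {V : Set (Fin n → ℝ)}
    (hV : IsOpen V) (hu : DifferentiableOn ℝ u V) (hv : DifferentiableOn ℝ v V) (a c : ℝ)
    {x : Fin n → ℝ} (hx : x ∈ V) :
    grad (fun z => a * u z + c * v z) =ᶠ[𝓝 x] fun y => a • grad u y + c • grad v y := by
  filter_upwards [hV.mem_nhds hx] with y hy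
  exact grad_smul_add_smul (hu.differentiableAt (hV.mem_nhds hy))
    (hv.differentiableAt (hV.mem_nhds hy)) a c

lemma Filter.EventuallyEq.divergence_eq {F G : (Fin n → ℝ) → Fin n → ℝ} {x : Fin n → ℝ}
    (h : F =ᶠ[𝓝 x] G) : divergence F x = divergence G x := by
  refine Finset.sum_congr rfl fun j _ => Filter.EventuallyEq.pd_eq ?_ j
  filter_upwards [h] with y hy using congrFun hy j

lemma divergence_add {F G : (Fin n → ℝ) → Fin n → ℝ} {x : Fin n → ℝ}
    (hF : DifferentiableAt ℝ F x) (hG : DifferentiableAt ℝ G x) :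
    divergence (fun y j => F y j + G y j) x = divergence F x + divergence G x := by
  simp only [divergence, ← Finset.sum_add_distrib]
  exact Finset.sum_congr rfl fun j _ =>
    pd_add (differentiableAt_pi.1 hF j) (differentiableAt_pi.1 hG j) j

lemma divergence_const_mul {F : (Fin n → ℝ) → Fin n → ℝ} {x : Fin n → ℝ}
    (hF : DifferentiableAt ℝ F x) (c : ℝ) :
    divergence (fun y j => c * F y j) x = c * divergence F x := by
  simp only [divergence, Finset.mul_sum]
  exact Finset.sum_congr rfl fun j _ => pd_const_mul (differentiableAt_pi.1 hF j) c j

lemma IsCompact.eventually_forall_norm_le {X E : Type*} [TopologicalSpace X]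
    [SeminormedAddCommGroup E] {K : Set X} (hK : IsCompact K) {f : X → E}
    (hf : ContinuousOn f K) : ∀ᶠ M in atTop, ∀ x ∈ K, ‖f x‖ ≤ M := by
  obtain ⟨C, hC⟩ := hK.exists_bound_of_continuousOn hf
  exact eventually_atTop.2 ⟨C, fun M hM x hx => (hC x hx).trans hM⟩

lemma eventually_abs_divergence_le {K V : Set (Fin n → ℝ)} (hK : IsCompact K) (hV : IsOpen V)
    (hKV : K ⊆ V) {F : (Fin n → ℝ) → Fin n → ℝ} (hF : ContDiffOn ℝ 1 F V) :
    ∀ᶠ M in atTop, ∀ x ∈ K, |divergence F x| ≤ M :=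
  hK.eventually_forall_norm_le <| ContinuousOn.mono (continuousOn_finsetSum _ fun j _ =>
    ((contDiffOn_pi.1 hF j).pd hV (m := 0) (by norm_num) j).continuousOn) hKV

lemma eventually_grad_hessian_le {K V : Set (Fin n → ℝ)} (hK : IsCompact K) (hV : IsOpen V)
    (hKV : K ⊆ V) {u : (Fin n → ℝ) → ℝ} (hu : ContDiffOn ℝ 2 u V) :
    ∀ᶠ M in atTop, ∀ x ∈ K,
      enorm' (grad u x) ≤ M ∧ ∀ i j, |pd j (fun y => grad u y i) x| ≤ M := by
  have hgrad : ContDiffOn ℝ 1 (grad u) V := hu.grad hV (by norm_num)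
  have hcont : ContinuousOn
      (fun x => (enorm' (grad u x), fun i j => pd j (fun y => grad u y i) x)) K :=
    (continuous_enorm'.comp_continuousOn hgrad.continuousOn |>.prodMk <|
      continuousOn_pi.2 fun i => continuousOn_pi.2 fun j =>
        ((contDiffOn_pi.1 hgrad i).pd hV (m := 0) (by norm_num) j).continuousOn).mono hKV
  filter_upwards [hK.eventually_forall_norm_le hcont] with M hM x hx
  refine ⟨(Real.le_norm_self _).trans ((norm_fst_le _).trans (hM x hx)), fun i j => ?_⟩
  calc |pd j (fun y => grad u y i) x|
      ≤ ‖fun i j => pd j (fun y => grad u y i) x‖ :=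
        (norm_le_pi_norm (fun j => pd j (fun y => grad u y i) x) j).trans
          (norm_le_pi_norm (fun i j => pd j (fun y => grad u y i) x) i)
    _ ≤ M := (norm_snd_le _).trans (hM x hx)

lemma abs_divergence_comp_le {R : (Fin n → ℝ) → (Fin n → ℝ) → Fin n → ℝ}
    {G : (Fin n → ℝ) → Fin n → ℝ} {x : Fin n → ℝ}
    (hR : DifferentiableAt ℝ (fun p => R p.1 p.2) (x, G x)) (hG : DifferentiableAt ℝ G x)
    {C r : ℝ} (hC : 0 ≤ C)
    (hRbound : ∀ L : List (Fin n ⊕ Fin n),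
      L.countP Sum.isRight ≤ 3 → L.countP Sum.isLeft ≤ 1 → ∀ k : Fin n,
        |iterPdxq L (fun p => R p.1 p.2 k) (x, G x)|
          ≤ C * enorm' (G x) ^ (3 - L.countP Sum.isRight))
    (hGx : enorm' (G x) ≤ r) (hG' : ∀ i j, |pd j (fun y => G y i) x| ≤ r) :
    |divergence (fun y => R y (G y)) x| ≤ n * (n + 1) * C * r ^ 3 := by
  have hr : 0 ≤ r := (enorm'_nonneg _).trans hGx
  have hbound : ∀ L : List (Fin n ⊕ Fin n), L.countP Sum.isRight ≤ 3 →
      L.countP Sum.isLeft ≤ 1 → ∀ k : Fin n,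
        |iterPdxq L (fun p => R p.1 p.2 k) (x, G x)| ≤ C * r ^ (3 - L.countP Sum.isRight) :=
    fun L h3 h1 k => (hRbound L h3 h1 k).trans (by gcongr; exact enorm'_nonneg _)
  have hRx : ∀ k, |pdxq (.inl k) (fun p => R p.1 p.2 k) (x, G x)| ≤ C * r ^ 3 :=
    fun k => hbound [.inl k] (by simp) (by simp) k
  have hRq : ∀ i k, |pdxq (.inr i) (fun p => R p.1 p.2 k) (x, G x)| ≤ C * r ^ 2 :=
    fun i k => hbound [.inr i] (by simp) (by simp) k
  have hterm : ∀ j, |pd j (fun y => R y (G y) j) x| ≤ C * r ^ 3 + n * (r * (C * r ^ 2)) := by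
    intro j
    rw [pd_comp_prodMk (F := fun p => R p.1 p.2 j) (differentiableAt_pi.1 hR j) hG]
    refine (abs_add_le _ _).trans (add_le_add (hRx j) ?_)
    refine (Finset.abs_sum_le_sum_abs _ _).trans ?_
    simpa using Finset.sum_le_sum fun i (_ : i ∈ Finset.univ) =>
      (abs_mul _ _).trans_le (mul_le_mul (hG' i j) (hRq i j) (abs_nonneg _) hr)
  calc |divergence (fun y => R y (G y)) x| ≤ ∑ j, |pd j (fun y => R y (G y) j) x| :=
        Finset.abs_sum_le_sum_abs _ _
    _ ≤ ∑ _j : Fin n, (C * r ^ 3 + n * (r * (C * r ^ 2))) := Finset.sum_le_sum fun j _ => hterm j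
    _ = n * (n + 1) * C * r ^ 3 := by simp; ring

lemma divergence_coeff_ansatz_eq {V : Set (Fin n → ℝ)} (hV : IsOpen V) {x : Fin n → ℝ}
    (hx : x ∈ V) {γ : (Fin n → ℝ) → ℝ} {b : (Fin n → ℝ) → Fin n → ℝ}
    {R Cvec : (Fin n → ℝ) → (Fin n → ℝ) → Fin n → ℝ}
    (hCvec : ∀ x p k, Cvec x p k = γ x * p k + (∑ i, p i ^ 2) * b x k + R x p k)
    {u₁ u₂ : (Fin n → ℝ) → ℝ} (hu₁ : ContDiffOn ℝ 2 u₁ V) (hu₂ : ContDiffOn ℝ 2 u₂ V)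
    (hγ : DifferentiableAt ℝ γ x) (hb : DifferentiableAt ℝ b x) (ε : ℝ)
    (hR : DifferentiableAt ℝ (fun y => R y (grad (fun z => ε * u₁ z + ε ^ 2 * u₂ z) y)) x)
    (h₁ : divergence (fun y j => γ y * grad u₁ y j) x = 0)
    (h₂ : divergence (fun y j => γ y * grad u₂ y j) x
      + divergence (fun y j => b y j * ∑ i, grad u₁ y i ^ 2) x = 0) :
    divergence (fun y => Cvec y (grad (fun z => ε * u₁ z + ε ^ 2 * u₂ z) y)) x =
      ε ^ 3 * divergence (fun y j => b y j * (2 * ∑ i, grad u₁ y i * grad u₂ y i)) x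
      + ε ^ 4 * divergence (fun y j => b y j * ∑ i, grad u₂ y i ^ 2) x
      + divergence (fun y => R y (grad (fun z => ε * u₁ z + ε ^ 2 * u₂ z) y)) x := by
  have hgrad₁ := hu₁.differentiableAt_grad hV hx
  have hgrad₂ := hu₂.differentiableAt_grad hV hx
  have hexpand : (fun y => Cvec y (grad (fun z => ε * u₁ z + ε ^ 2 * u₂ z) y)) =ᶠ[𝓝 x] fun y j =>
      ε * (γ y * grad u₁ y j)
      + ε ^ 2 * (γ y * grad u₂ y j + b y j * ∑ i, grad u₁ y i ^ 2)
      + ε ^ 3 * (b y j * (2 * ∑ i, grad u₁ y i * grad u₂ y i))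
      + ε ^ 4 * (b y j * ∑ i, grad u₂ y i ^ 2)
      + R y (grad (fun z => ε * u₁ z + ε ^ 2 * u₂ z) y) j := by
    filter_upwards [eventuallyEq_grad_smul_add_smul hV (hu₁.differentiableOn two_ne_zero)
      (hu₂.differentiableOn two_ne_zero) ε (ε ^ 2) hx] with y hy
    ext j
    have hsq : ∑ i, (ε * grad u₁ y i + ε ^ 2 * grad u₂ y i) ^ 2 =
        ε ^ 2 * ∑ i, grad u₁ y i ^ 2 + ε ^ 3 * (2 * ∑ i, grad u₁ y i * grad u₂ y i)
          + ε ^ 4 * ∑ i, grad u₂ y i ^ 2 := by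
      simp only [Finset.mul_sum, ← Finset.sum_add_distrib]
      exact Finset.sum_congr rfl fun i _ => by ring
    rw [hCvec, hy]
    simp only [Pi.add_apply, Pi.smul_apply, smul_eq_mul, hsq]
    ring
  rw [hexpand.divergence_eq]
  simp (disch := first | exact hR | fun_prop) only [divergence_add, divergence_const_mul]
  linear_combination ε * h₁ + ε ^ 2 * h₂

lemma grad_hessian_ansatz_le {V : Set (Fin n → ℝ)} (hV : IsOpen V) {x : Fin n → ℝ}
    (hx : x ∈ V) {u₁ u₂ : (Fin n → ℝ) → ℝ} (hu₁ : ContDiffOn ℝ 2 u₁ V)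
    (hu₂ : ContDiffOn ℝ 2 u₂ V) {ε M : ℝ} (hε : 0 ≤ ε) (hε₁ : ε ≤ 1)
    (h₁ : enorm' (grad u₁ x) ≤ M ∧ ∀ i j, |pd j (fun y => grad u₁ y i) x| ≤ M)
    (h₂ : enorm' (grad u₂ x) ≤ M ∧ ∀ i j, |pd j (fun y => grad u₂ y i) x| ≤ M) :
    enorm' (grad (fun z => ε * u₁ z + ε ^ 2 * u₂ z) x) ≤ 2 * ε * M ∧
      ∀ i j, |pd j (fun y => grad (fun z => ε * u₁ z + ε ^ 2 * u₂ z) y i) x| ≤ 2 * ε * M := by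
  have hM : 0 ≤ M := (enorm'_nonneg _).trans h₁.1
  have hcomb : ∀ a c, a ≤ M → c ≤ M → ε * a + ε ^ 2 * c ≤ 2 * ε * M := fun a c ha hc => by
    nlinarith [mul_le_mul_of_nonneg_left ha hε, mul_le_mul_of_nonneg_left hc (sq_nonneg ε),
      mul_nonneg (mul_nonneg hε hM) (sub_nonneg.2 hε₁)]
  have hgrad := eventuallyEq_grad_smul_add_smul hV (hu₁.differentiableOn two_ne_zero)
    (hu₂.differentiableOn two_ne_zero) ε (ε ^ 2) hx
  refine ⟨?_, fun i j => ?_⟩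
  · rw [hgrad.eq_of_nhds]
    exact (enorm'_smul_add_smul_le _ _ hε (sq_nonneg ε)).trans (hcomb _ _ h₁.1 h₂.1)
  · have hpd : ∀ {u : (Fin n → ℝ) → ℝ}, ContDiffOn ℝ 2 u V →
        DifferentiableAt ℝ (fun y => grad u y i) x := fun hu =>
      differentiableAt_pi.1 (hu.differentiableAt_grad hV hx) i
    have hev : (fun y => grad (fun z => ε * u₁ z + ε ^ 2 * u₂ z) y i) =ᶠ[𝓝 x]
        fun y => ε * grad u₁ y i + ε ^ 2 * grad u₂ y i := by
      filter_upwards [hgrad] with y hy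
      simp [hy]
    rw [hev.pd_eq, pd_add ((hpd hu₁).const_mul ε) ((hpd hu₂).const_mul _),
      pd_const_mul (hpd hu₁), pd_const_mul (hpd hu₂)]
    refine (abs_add_le _ _).trans ?_
    rw [abs_mul, abs_mul, abs_of_nonneg hε, abs_of_nonneg (sq_nonneg ε)]
    exact hcomb _ _ (h₁.2 i j) (h₂.2 i j)

lemma abs_divergence_coeff_ansatz_le {V : Set (Fin n → ℝ)} (hV : IsOpen V) {x : Fin n → ℝ}
    (hx : x ∈ V) {γ : (Fin n → ℝ) → ℝ} {b : (Fin n → ℝ) → Fin n → ℝ}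
    {R Cvec : (Fin n → ℝ) → (Fin n → ℝ) → Fin n → ℝ}
    (hCvec : ∀ x p k, Cvec x p k = γ x * p k + (∑ i, p i ^ 2) * b x k + R x p k)
    {u₁ u₂ : (Fin n → ℝ) → ℝ} (hu₁ : ContDiffOn ℝ 2 u₁ V) (hu₂ : ContDiffOn ℝ 2 u₂ V)
    (hγ : DifferentiableAt ℝ γ x) (hb : DifferentiableAt ℝ b x) {ε M C : ℝ} (hε : 0 < ε)
    (hε₁ : ε ≤ 1) (hC : 0 ≤ C)
    (hM₁ : enorm' (grad u₁ x) ≤ M ∧ ∀ i j, |pd j (fun y => grad u₁ y i) x| ≤ M)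
    (hM₂ : enorm' (grad u₂ x) ≤ M ∧ ∀ i j, |pd j (fun y => grad u₂ y i) x| ≤ M)
    (hA : |divergence (fun y j => b y j * (2 * ∑ i, grad u₁ y i * grad u₂ y i)) x| ≤ M)
    (hB : |divergence (fun y j => b y j * ∑ i, grad u₂ y i ^ 2) x| ≤ M)
    (hR : DifferentiableAt ℝ (fun p => R p.1 p.2)
      (x, grad (fun z => ε * u₁ z + ε ^ 2 * u₂ z) x))
    (hRbound : ∀ L : List (Fin n ⊕ Fin n),
      L.countP Sum.isRight ≤ 3 → L.countP Sum.isLeft ≤ 1 → ∀ k : Fin n,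
        |iterPdxq L (fun p => R p.1 p.2 k) (x, grad (fun z => ε * u₁ z + ε ^ 2 * u₂ z) x)|
          ≤ C * enorm' (grad (fun z => ε * u₁ z + ε ^ 2 * u₂ z) x) ^ (3 - L.countP Sum.isRight))
    (h₁ : divergence (fun y j => γ y * grad u₁ y j) x = 0)
    (h₂ : divergence (fun y j => γ y * grad u₂ y j) x
      + divergence (fun y j => b y j * ∑ i, grad u₁ y i ^ 2) x = 0) :
    |divergence (fun y => Cvec y (grad (fun z => ε * u₁ z + ε ^ 2 * u₂ z) y)) x|
      ≤ (2 * M + 8 * n * (n + 1) * C * M ^ 3) * ε ^ 3 := by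
  obtain ⟨hgrad, hhess⟩ := grad_hessian_ansatz_le hV hx hu₁ hu₂ hε.le hε₁ hM₁ hM₂
  have hw := ((contDiffOn_const.mul hu₁).add (contDiffOn_const.mul hu₂)).differentiableAt_grad
    hV hx (u := fun z => ε * u₁ z + ε ^ 2 * u₂ z)
  have hrem := abs_divergence_comp_le hR hw hC hRbound hgrad hhess
  rw [divergence_coeff_ansatz_eq hV hx hCvec hu₁ hu₂ hγ hb ε
    (hR.comp x (differentiableAt_fun_id.prodMk hw) :) h₁ h₂]
  calc _ ≤ |ε ^ 3 * _| + |ε ^ 4 * _| + |_| := abs_add_three _ _ _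
    _ ≤ ε ^ 3 * M + ε ^ 3 * M + n * (n + 1) * C * (2 * ε * M) ^ 3 := by
      rw [abs_mul, abs_mul, abs_pow, abs_pow, abs_of_pos hε]
      gcongr ?_ + ?_ + ?_
      · gcongr
      · calc ε ^ 4 * |_| ≤ ε ^ 4 * M := by gcongr
          _ ≤ ε ^ 3 * M := by
            gcongr ?_ * M
            · exact (abs_nonneg _).trans hA
            · exact pow_le_pow_of_le_one hε.le hε₁ (by norm_num)
    _ = _ := by ring

theorem stmt_12_general {n : ℕ} (Ω : Set (Fin n → ℝ))
    (hΩb : Bornology.IsBounded Ω)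
    -- γ and b are smooth on a neighborhood V of the closure of Ω
    (V : Set (Fin n → ℝ)) (hV : IsOpen V) (hΩV : closure Ω ⊆ V)
    (γ : (Fin n → ℝ) → ℝ) (b : (Fin n → ℝ) → Fin n → ℝ)
    (hγ : ContDiffOn ℝ (⊤ : ℕ∞) γ V) (hb : ContDiffOn ℝ (⊤ : ℕ∞) b V)
    (h : ℝ) (hh : 0 < h)
    -- R is smooth on (a neighborhood W of) closure Ω × H where H = {q : |q| ≤ h}
    (R : (Fin n → ℝ) → (Fin n → ℝ) → Fin n → ℝ)
    (W : Set ((Fin n → ℝ) × (Fin n → ℝ))) (hW : IsOpen W)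
    (hWsub : (closure Ω) ×ˢ {q : Fin n → ℝ | enorm' q ≤ h} ⊆ W)
    (hR : ContDiffOn ℝ (⊤ : ℕ∞) (fun p => R p.1 p.2) W)
    (C₂ : ℝ) (hC₂ : 0 < C₂)
    -- the bound |∂_q^α ∂_x^β R(x,q)| ≤ C₂ |q|^{3 - |α|} for |α| ≤ 3, |β| ≤ 1
    (hRbound : ∀ L : List (Fin n ⊕ Fin n),
      L.countP Sum.isRight ≤ 3 → L.countP Sum.isLeft ≤ 1 →
      ∀ x ∈ closure Ω, ∀ qv : Fin n → ℝ, enorm' qv ≤ h → ∀ k : Fin n,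
        |iterPdxq L (fun p => R p.1 p.2 k) (x, qv)|
          ≤ C₂ * enorm' qv ^ (3 - L.countP Sum.isRight))
    -- the full coefficient vector field C⃗(x,p) = γ(x) p + |p|² b(x) + R(x,p)
    (Cvec : (Fin n → ℝ) → (Fin n → ℝ) → Fin n → ℝ)
    (hCvec : ∀ x p k, Cvec x p k = γ x * p k + (∑ i, p i ^ 2) * b x k + R x p k)
    -- u₁ and u₂ are C² on V and solve the first- and second-order equations in Ω
    (u₁ u₂ : (Fin n → ℝ) → ℝ)
    (hu₁ : ContDiffOn ℝ 2 u₁ V) (hu₂ : ContDiffOn ℝ 2 u₂ V)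
    (heq₁ : ∀ x ∈ Ω, ∑ j, pd j (fun y => γ y * pd j u₁ y) x = 0)
    (heq₂ : ∀ x ∈ Ω,
      (∑ j, pd j (fun y => γ y * pd j u₂ y) x)
        + (∑ j, pd j (fun y => b y j * ∑ i, (pd i u₁ y) ^ 2) x) = 0) :
    ∃ ε₀ > (0 : ℝ), ∃ C > (0 : ℝ), ∀ ε : ℝ, 0 < ε → ε < ε₀ → ∀ x ∈ Ω,
      enorm' (fun j => pd j (fun y => ε * u₁ y + ε ^ 2 * u₂ y) x) ≤ h ∧
      |∑ j, pd j
          (fun y => Cvec y (fun i => pd i (fun z => ε * u₁ z + ε ^ 2 * u₂ z) y) j) x|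
        ≤ C * ε ^ 3 := by
  have hK : IsCompact (closure Ω) := hΩb.isCompact_closure
  have hb₁ : ContDiffOn ℝ 1 b V := hb.of_le (by simp)
  have hgrad₁ : ContDiffOn ℝ 1 (grad u₁) V := hu₁.grad hV (by norm_num)
  have hgrad₂ : ContDiffOn ℝ 1 (grad u₂) V := hu₂.grad hV (by norm_num)
  obtain ⟨M, ⟨⟨hM₁, hM₂⟩, hA, hB⟩, hM⟩ := ((((eventually_grad_hessian_le hK hV hΩV hu₁).and
      (eventually_grad_hessian_le hK hV hΩV hu₂)).and
    ((eventually_abs_divergence_le hK hV hΩV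
        (F := fun y j => b y j * (2 * ∑ i, grad u₁ y i * grad u₂ y i)) (by fun_prop)).and
      (eventually_abs_divergence_le hK hV hΩV
        (F := fun y j => b y j * ∑ i, grad u₂ y i ^ 2) (by fun_prop)))).and
    (eventually_ge_atTop 1)).exists
  refine ⟨min 1 (h / (2 * M)), by positivity, 2 * M + 8 * n * (n + 1) * C₂ * M ^ 3,
    by positivity, fun ε hε hεε₀ x hx => ?_⟩
  have hxK : x ∈ closure Ω := subset_closure hx
  have hxV : x ∈ V := hΩV hxK
  have hε₁ : ε ≤ 1 := hεε₀.le.trans (min_le_left _ _)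
  have hgrad_h : enorm' (grad (fun z => ε * u₁ z + ε ^ 2 * u₂ z) x) ≤ h := by
    have := (lt_div_iff₀ (by positivity)).1 (hεε₀.trans_le (min_le_right _ _))
    linarith [(grad_hessian_ansatz_le hV hxV hu₁ hu₂ hε.le hε₁ (hM₁ x hxK) (hM₂ x hxK)).1]
  refine ⟨hgrad_h, abs_divergence_coeff_ansatz_le hV hxV hCvec hu₁ hu₂
    ((hγ.contDiffAt (hV.mem_nhds hxV)).differentiableAt (by simp))
    ((hb.contDiffAt (hV.mem_nhds hxV)).differentiableAt (by simp)) hε hε₁ hC₂.le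
    (hM₁ x hxK) (hM₂ x hxK) (hA x hxK) (hB x hxK)
    ((hR.differentiableOn (by simp)).differentiableAt (hW.mem_nhds (hWsub ⟨hxK, hgrad_h⟩)))
    (hRbound · · · x hxK _ hgrad_h) (heq₁ x hx) (heq₂ x hx)⟩

theorem stmt_12 {n : ℕ} (Ω : Set (Fin n → ℝ)) (hΩo : IsOpen Ω)
    (hΩb : Bornology.IsBounded Ω)
    -- γ and b are smooth on a neighborhood V of the closure of Ω
    (V : Set (Fin n → ℝ)) (hV : IsOpen V) (hΩV : closure Ω ⊆ V)
    (γ : (Fin n → ℝ) → ℝ) (b : (Fin n → ℝ) → Fin n → ℝ)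
    (hγ : ContDiffOn ℝ (⊤ : ℕ∞) γ V) (hb : ContDiffOn ℝ (⊤ : ℕ∞) b V)
    (h : ℝ) (hh : 0 < h)
    -- R is smooth on (a neighborhood W of) closure Ω × H where H = {q : |q| ≤ h}
    (R : (Fin n → ℝ) → (Fin n → ℝ) → Fin n → ℝ)
    (W : Set ((Fin n → ℝ) × (Fin n → ℝ))) (hW : IsOpen W)
    (hWsub : (closure Ω) ×ˢ {q : Fin n → ℝ | enorm' q ≤ h} ⊆ W)
    (hR : ContDiffOn ℝ (⊤ : ℕ∞) (fun p => R p.1 p.2) W)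
    (C₂ : ℝ) (hC₂ : 0 < C₂)
    -- the bound |∂_q^α ∂_x^β R(x,q)| ≤ C₂ |q|^{3 - |α|} for |α| ≤ 3, |β| ≤ 1
    (hRbound : ∀ L : List (Fin n ⊕ Fin n),
      L.countP Sum.isRight ≤ 3 → L.countP Sum.isLeft ≤ 1 →
      ∀ x ∈ closure Ω, ∀ qv : Fin n → ℝ, enorm' qv ≤ h → ∀ k : Fin n,
        |iterPdxq L (fun p => R p.1 p.2 k) (x, qv)|
          ≤ C₂ * enorm' qv ^ (3 - L.countP Sum.isRight))
    -- the full coefficient vector field C⃗(x,p) = γ(x) p + |p|² b(x) + R(x,p)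
    (Cvec : (Fin n → ℝ) → (Fin n → ℝ) → Fin n → ℝ)
    (hCvec : ∀ x p k, Cvec x p k = γ x * p k + (∑ i, p i ^ 2) * b x k + R x p k)
    -- u₁ and u₂ are C² on V and solve the first- and second-order equations in Ω
    (u₁ u₂ : (Fin n → ℝ) → ℝ)
    (hu₁ : ContDiffOn ℝ 2 u₁ V) (hu₂ : ContDiffOn ℝ 2 u₂ V)
    (heq₁ : ∀ x ∈ Ω, ∑ j, pd j (fun y => γ y * pd j u₁ y) x = 0)
    (heq₂ : ∀ x ∈ Ω,
      (∑ j, pd j (fun y => γ y * pd j u₂ y) x)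
        + (∑ j, pd j (fun y => b y j * ∑ i, (pd i u₁ y) ^ 2) x) = 0) :
    ∃ ε₀ > (0 : ℝ), ∃ C > (0 : ℝ), ∀ ε : ℝ, 0 < ε → ε < ε₀ → ∀ x ∈ Ω,
      enorm' (fun j => pd j (fun y => ε * u₁ y + ε ^ 2 * u₂ y) x) ≤ h ∧
      |∑ j, pd j
          (fun y => Cvec y (fun i => pd i (fun z => ε * u₁ z + ε ^ 2 * u₂ z) y) j) x|
        ≤ C * ε ^ 3 :=
  stmt_12_general Ω hΩb V hV hΩV γ b hγ hb h hh R W hW hWsub hR C₂ hC₂ hRbound Cvec hCvec u₁ u₂ hu₁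
    hu₂ heq₁ heq₂
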